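/- arXiv:1403.5381 — 7 statements merged into one kernel-verified Lean document; each statement's English description precedes it below -/
import Mathlib

section
/- Let X be a binomially distributed random variable with parameters K and p (the number of successes in K independent Bernoulli trials with success probability p), and let L > 0 be a real number such that K·p ≥ 4·L. Then Pr[X < L] ≤ exp(−9·L/8); in particular, if L = ln(N) for a real N ≥ 3, then Pr[X < ln(N)] ≤ 1/N. -/
/-!
For `c ≥ 1` the indicator of `X < L` is at most `c ^ (L - X)`, so
`Pr[X < L] ≤ c ^ L · E[c ^ (-X)] = c ^ L · (p / c + 1 - p) ^ K`.
Taking `c = 4` and `1 - 3p/4 ≤ exp (-3p/4)` gives `Pr[X < L] ≤ exp (L log 4 - 3Kp/4)`,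
which is at most `exp ((log 4 - 3) L)` when `Kp ≥ 4L`; and `log 4 - 3 < -9/8`.
For `L = log N` the bound `exp (-9L/8) = N ^ (-9/8)` is below `1 / N`.
-/

open Finset Real

theorem binomial_lowerTail_le_rpow_mul_pow {K : ℕ} {p : ℝ} (hp0 : 0 ≤ p) (hp1 : p ≤ 1)
    (L : ℝ) {c : ℝ} (hc : 1 ≤ c) :
    (∑ i ∈ range (K + 1),
        if (i : ℝ) < L then (K.choose i : ℝ) * p ^ i * (1 - p) ^ (K - i) else 0)
      ≤ c ^ L * (p / c + (1 - p)) ^ K := by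
  have hc0 : 0 < c := by linarith
  rw [add_pow, mul_sum]
  refine sum_le_sum fun i _ => ?_
  split_ifs with hiL
  · have hshift : c ^ L * ((p / c) ^ i * (1 - p) ^ (K - i) * K.choose i)
        = c ^ (L - i) * ((K.choose i : ℝ) * p ^ i * (1 - p) ^ (K - i)) := by
      rw [rpow_sub hc0, rpow_natCast, div_pow]
      field_simp
    rw [hshift]
    exact le_mul_of_one_le_left (by positivity) (one_le_rpow hc (by linarith))
  · positivity

theorem one_sub_pow_le_exp_neg_mul {x : ℝ} (hx : x ≤ 1) (n : ℕ) :
    (1 - x) ^ n ≤ exp (-(n * x)) := by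
  calc (1 - x) ^ n ≤ exp (-x) ^ n := pow_le_pow_left₀ (by linarith) (one_sub_le_exp_neg x) n
    _ = exp (-(n * x)) := by rw [← exp_nat_mul]; ring_nf

theorem log_four_lt : log 4 < 15 / 8 := by
  rw [log_four_eq]
  linarith [log_two_lt_d9]

theorem binomial_lower_tail_general (K : ℕ) (p : ℝ) (hp0 : 0 ≤ p) (hp1 : p ≤ 1)
    (L : ℝ) (hL : 0 < L) (hKp : 4 * L ≤ (K : ℝ) * p) :
    (∑ i ∈ Finset.range (K + 1),
        if (i : ℝ) < L then (K.choose i : ℝ) * p ^ i * (1 - p) ^ (K - i) else 0)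
      ≤ Real.exp (-(9 * L) / 8)
    ∧ ∀ N : ℝ, 3 ≤ N → L = Real.log N →
        (∑ i ∈ Finset.range (K + 1),
            if (i : ℝ) < L then (K.choose i : ℝ) * p ^ i * (1 - p) ^ (K - i) else 0)
          ≤ 1 / N := by
  have tail := calc
    (∑ i ∈ range (K + 1),
        if (i : ℝ) < L then (K.choose i : ℝ) * p ^ i * (1 - p) ^ (K - i) else 0)
        ≤ 4 ^ L * (1 - 3 * p / 4) ^ K := by
      convert binomial_lowerTail_le_rpow_mul_pow hp0 hp1 L (by norm_num : (1 : ℝ) ≤ 4) using 3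
      ring
    _ ≤ exp (log 4 * L) * exp (-(K * (3 * p / 4))) := by
      rw [← rpow_def_of_pos (by norm_num)]
      gcongr
      exact one_sub_pow_le_exp_neg_mul (by linarith) K
    _ ≤ exp (-(9 * L) / 8) := by
      rw [← exp_add]
      exact exp_le_exp.2 (by nlinarith [log_four_lt])
  refine ⟨tail, fun N hN hLN => tail.trans ?_⟩
  calc exp (-(9 * L) / 8) ≤ exp (-L) := exp_le_exp.2 (by linarith)
    _ = 1 / N := by rw [hLN, exp_neg, exp_log (by linarith), one_div]

/-- Lower-tail bound for a binomial random variable `X ~ Binomial(K, p)`: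
if `K·p ≥ 4·L` for a real `L > 0`, then
`Pr[X < L] = ∑_{i < L} C(K,i) pⁱ (1-p)^{K-i} ≤ exp (-9L/8)`;
in particular, if `L = ln N` with `N ≥ 3`, then `Pr[X < ln N] ≤ 1/N`. -/
theorem binomial_lower_tail (K : ℕ) (hK : 0 < K) (p : ℝ) (hp0 : 0 ≤ p) (hp1 : p ≤ 1)
    (L : ℝ) (hL : 0 < L) (hKp : 4 * L ≤ (K : ℝ) * p) :
    (∑ i ∈ Finset.range (K + 1),
        if (i : ℝ) < L then (K.choose i : ℝ) * p ^ i * (1 - p) ^ (K - i) else 0)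
      ≤ Real.exp (-(9 * L) / 8)
    ∧ ∀ N : ℝ, 3 ≤ N → L = Real.log N →
        (∑ i ∈ Finset.range (K + 1),
            if (i : ℝ) < L then (K.choose i : ℝ) * p ^ i * (1 - p) ^ (K - i) else 0)
          ≤ 1 / N :=
  binomial_lower_tail_general K p hp0 hp1 L hL hKp
end

section
/- Let m ≥ 1 and t ≥ 4 be integers and set n = m·t. Let C ⊆ {1, ..., n} be a nonempty set of positions such that for every integer j with 0 ≤ j ≤ t−4, C intersects the window {j·m + 1, j·m + 2, ..., j·m + 4m}. Then any two consecutive elements of C ∪ {0, n} (i.e., any two elements of C ∪ {0, n} with no element of C strictly between them) differ by at most 5m + 1. -/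
/-!
If `y - x ≥ 5m`, the smallest multiple `j·m ≥ x` satisfies `j·m < x + m`, so the whole window
`{j·m + 1, …, j·m + 4m}` lies strictly between `x` and `y`; since `y ≤ n = m·t` this window is
one of the sliding buckets, and the element of `C` it contains separates `x` from `y`.
-/

theorem Nat.exists_mul_mem_Ico {m : ℕ} (hm : 0 < m) (x : ℕ) : ∃ j, x ≤ j * m ∧ j * m < x + m := by
  refine ⟨(x + m - 1) / m, ?_, ?_⟩
  · have := Nat.lt_div_mul_add (a := x + m - 1) hm
    omega
  · have := Nat.div_mul_le_self (x + m - 1) m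
    omega

theorem Nat.exists_window_between {m x y : ℕ} (hm : 0 < m) (hxy : x + 5 * m ≤ y) :
    ∃ j, x ≤ j * m ∧ j * m + 4 * m < y := by
  obtain ⟨j, hxj, hjx⟩ := Nat.exists_mul_mem_Ico hm x
  exact ⟨j, hxj, by omega⟩

theorem sliding_buckets_general (m t : ℕ) (hm : 1 ≤ m) (n : ℕ) (hn : n = m * t)
    (C : Finset ℕ) (hCsub : ∀ c ∈ C, 1 ≤ c ∧ c ≤ n)
    (hwin : ∀ j : ℕ, j ≤ t - 4 → ∃ c ∈ C, j * m + 1 ≤ c ∧ c ≤ j * m + 4 * m) :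
    ∀ x ∈ insert 0 (insert n C), ∀ y ∈ insert 0 (insert n C),
      x < y → (∀ c ∈ C, ¬(x < c ∧ c < y)) → y - x ≤ 5 * m + 1 := by
  intro x _ y hy _ hgap
  have hyn : y ≤ n := by
    simp only [Finset.mem_insert] at hy
    rcases hy with rfl | rfl | hyC
    exacts [Nat.zero_le _, le_rfl, (hCsub y hyC).2]
  by_contra! hlong
  obtain ⟨j, hxj, hjy⟩ := Nat.exists_window_between (x := x) (y := y) hm (by omega)
  have hjt : (j + 4) * m < t * m := by
    rw [add_mul, Nat.mul_comm t, ← hn]; omega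
  obtain ⟨c, hc, hjc, hcj⟩ := hwin j (by have := Nat.lt_of_mul_lt_mul_right hjt; omega)
  exact hgap c hc ⟨by omega, by omega⟩

/-- Sliding-bucket claim in the Terasort analysis: let `n = m·t` with `m ≥ 1`,
`t ≥ 4`, and let `C ⊆ {1, ..., n}` be a nonempty set of positions meeting every
window `{j·m + 1, ..., j·m + 4m}` for `0 ≤ j ≤ t - 4`.  Then any two consecutive
elements of `C ∪ {0, n}` (two elements with no element of `C` strictly between
them) differ by at most `5m + 1`. -/
theorem sliding_buckets (m t : ℕ) (hm : 1 ≤ m) (ht : 4 ≤ t) (n : ℕ) (hn : n = m * t)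
    (C : Finset ℕ) (hCne : C.Nonempty) (hCsub : ∀ c ∈ C, 1 ≤ c ∧ c ≤ n)
    (hwin : ∀ j : ℕ, j ≤ t - 4 → ∃ c ∈ C, j * m + 1 ≤ c ∧ c ≤ j * m + 4 * m) :
    ∀ x ∈ insert 0 (insert n C), ∀ y ∈ insert 0 (insert n C),
      x < y → (∀ c ∈ C, ¬(x < c ∧ c < y)) → y - x ≤ 5 * m + 1 :=
  sliding_buckets_general m t hm n hn C hCsub hwin
end

section
/- Let s ≥ 1 and q ≥ 2 be integers and set m = s·q. Let A be a set of m distinct real numbers with increasing enumeration a_1 < a_2 < ... < a_m. Define the sample points λ_0 = a_1 and λ_j = a_{j·q} for 1 ≤ j ≤ s, and for a half-open interval [b, b') with b < b' define the estimated count est(b, b') = Σ_{j=0}^{s−1} q · len([b, b') ∩ [λ_j, λ_{j+1})) / (λ_{j+1} − λ_j), where len denotes the length (Lebesgue measure) of an interval. Then for all reals b < b', the actual count satisfies |A ∩ [b, b')| ≤ est(b, b') + 2q + 1. -/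
/-!
The sample points cut `A` into the buckets `[λ_j, λ_{j+1})`, each holding at most `q` elements,
plus the maximum `a_m = λ_s`, which lies in no bucket. A bucket containing neither `b` nor `b'` in
its interior lies inside `[b, b')` or is disjoint from it; in the first case the uniform estimate
is exactly `q`, in the second the count is `0`, so either way the estimate dominates the count.
The buckets are disjoint, so at most one has `b`, and at most one has `b'`, in its interior; these
two contribute at most `q` each, and the maximum contributes the final `1`.
-/

open Finset MeasureTheory

/-- The number of points that `I` receives when `q` points are spread uniformly over `[x, y)`:
the paper's estimated count, with `[x, y)` one of the intervals `[λ_j, λ_{j+1})`. -/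
noncomputable def uniformEstimate (q : ℕ) (x y : ℝ) (I : Set ℝ) : ℝ :=
  q * (volume (I ∩ Set.Ico x y)).toReal / (y - x)

section UniformEstimate

variable {q : ℕ} {x y : ℝ}

lemma uniformEstimate_nonneg (hxy : x ≤ y) (I : Set ℝ) : 0 ≤ uniformEstimate q x y I :=
  div_nonneg (by positivity) (sub_nonneg.2 hxy)

lemma uniformEstimate_of_Ico_subset {I : Set ℝ} (hxy : x < y) (h : Set.Ico x y ⊆ I) :
    uniformEstimate q x y I = q := by
  have hd : 0 < y - x := sub_pos.2 hxy
  rw [uniformEstimate, Set.inter_eq_right.2 h, Real.volume_Ico, ENNReal.toReal_ofReal hd.le,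
    mul_div_assoc, div_self hd.ne', mul_one]

end UniformEstimate

lemma Set.Ico_subset_Ico_or_disjoint {α : Type*} [LinearOrder α] {x y b b' : α}
    (hb : b ∉ Set.Ioo x y) (hb' : b' ∉ Set.Ioo x y) :
    Set.Ico x y ⊆ Set.Ico b b' ∨ Disjoint (Set.Ico b b') (Set.Ico x y) := by
  simp only [Set.mem_Ioo, not_and_or, not_lt] at hb hb'
  by_cases hsub : b ≤ x ∧ y ≤ b'
  · exact .inl (Set.Ico_subset_Ico hsub.1 hsub.2)
  · refine .inr (Set.disjoint_left.2 fun z hz hz' => ?_)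
    simp only [Set.mem_Ico] at hz hz'
    rw [not_and_or, not_le, not_le] at hsub
    rcases hb with hb | hb <;> rcases hb' with hb' | hb' <;> rcases hsub with h | h <;> order

section Buckets

variable {ι : Type*} [Fintype ι] (f : ι → ℝ) (lam : ℕ → ℝ)

lemma card_inter_Ico_le_uniformEstimate {q : ℕ} {x y : ℝ} (hxy : x < y)
    (hq : #{i | f i ∈ Set.Ico x y} ≤ q) (b b' : ℝ) :
    (#{i | f i ∈ Set.Ico b b' ∩ Set.Ico x y} : ℝ)
      ≤ uniformEstimate q x y (Set.Ico b b') + (if b ∈ Set.Ioo x y then (q : ℝ) else 0)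
        + (if b' ∈ Set.Ioo x y then (q : ℝ) else 0) := by
  have hle : (#{i | f i ∈ Set.Ico b b' ∩ Set.Ico x y} : ℝ) ≤ q := by
    exact_mod_cast (card_le_card (monotone_filter_right univ
      fun i _ (h : f i ∈ Set.Ico b b' ∩ Set.Ico x y) => h.2)).trans hq
  have hest := uniformEstimate_nonneg (q := q) hxy.le (Set.Ico b b')
  split_ifs with hb hb' hb'
  · linarith
  · linarith
  · linarith
  rcases Set.Ico_subset_Ico_or_disjoint hb hb' with hsub | hdisj
  · rw [uniformEstimate_of_Ico_subset hxy hsub]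
    linarith
  · simp [Set.disjoint_iff_inter_eq_empty.1 hdisj, hest]


lemma exists_mem_Ico_succ_of_mem_Ico {x : ℝ} : ∀ {n : ℕ}, x ∈ Set.Ico (lam 0) (lam n) →
    ∃ j < n, x ∈ Set.Ico (lam j) (lam (j + 1))
  | 0, hx => absurd hx.2 (not_lt.2 hx.1)
  | n + 1, hx => by
    by_cases hn : x < lam n
    · obtain ⟨j, hj, hxj⟩ := exists_mem_Ico_succ_of_mem_Ico ⟨hx.1, hn⟩
      exact ⟨j, by omega, hxj⟩
    · exact ⟨n, n.lt_succ_self, not_lt.1 hn, hx.2⟩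

lemma card_filter_mem_Ico_succ_le_one {s : ℕ} (hlam : MonotoneOn lam (Set.Iic s)) (x : ℝ) :
    #{j ∈ range s | x ∈ Set.Ico (lam j) (lam (j + 1))} ≤ 1 := by
  refine card_le_one.2 fun j hj k hk => ?_
  simp only [mem_filter, mem_range, Set.mem_Ico] at hj hk
  by_contra hne
  wlog hjk : j < k generalizing j k
  · exact this k j hk hj (Ne.symm hne) (by omega)
  have := hlam (Set.mem_Iic.2 (by omega : j + 1 ≤ s)) (Set.mem_Iic.2 hk.1.le) hjk
  linarith [hj.2.2, hk.2.1]

lemma sum_ite_mem_Ioo_le {s : ℕ} (hlam : MonotoneOn lam (Set.Iic s)) (q : ℕ) (x : ℝ) :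
    ∑ j ∈ range s, (if x ∈ Set.Ioo (lam j) (lam (j + 1)) then (q : ℝ) else 0) ≤ q := by
  rw [← sum_filter, sum_const, nsmul_eq_mul]
  have hcard : #{j ∈ range s | x ∈ Set.Ioo (lam j) (lam (j + 1))} ≤ 1 :=
    (card_le_card (monotone_filter_right _ fun _ _ h => Set.Ioo_subset_Ico_self h)).trans
      (card_filter_mem_Ico_succ_le_one lam hlam x)
  exact mul_le_of_le_one_left (by positivity) (by exact_mod_cast hcard)

lemma card_le_sum_card_inter_Ico_add (S : Set ℝ) [DecidablePred (· ∈ S)] (s : ℕ) :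
    #{i | f i ∈ S} ≤ ∑ j ∈ range s, #{i | f i ∈ S ∩ Set.Ico (lam j) (lam (j + 1))}
      + #{i | f i ∉ Set.Ico (lam 0) (lam s)} := by
  classical
  calc #{i | f i ∈ S}
      ≤ #((range s).biUnion (fun j => {i | f i ∈ S ∩ Set.Ico (lam j) (lam (j + 1))})
          ∪ ({i | f i ∉ Set.Ico (lam 0) (lam s)} : Finset ι)) := by
        refine card_le_card fun i hi => ?_
        simp only [mem_filter, mem_univ, true_and] at hi
        by_cases hout : f i ∈ Set.Ico (lam 0) (lam s)
        · obtain ⟨j, hj, hij⟩ := exists_mem_Ico_succ_of_mem_Ico lam hout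
          exact mem_union_left _
            (mem_biUnion.2 ⟨j, mem_range.2 hj, mem_filter.2 ⟨mem_univ i, hi, hij⟩⟩)
        · exact mem_union_right _ (by simpa using hout)
    _ ≤ _ := (card_union_le _ _).trans (Nat.add_le_add_right card_biUnion_le _)

theorem card_Ico_le_sum_uniformEstimate {s q : ℕ} (hlam : StrictMonoOn lam (Set.Iic s))
    (hbucket : ∀ j < s, #{i | f i ∈ Set.Ico (lam j) (lam (j + 1))} ≤ q) (b b' : ℝ) :
    (#{i | f i ∈ Set.Ico b b'} : ℝ)
      ≤ ∑ j ∈ range s, uniformEstimate q (lam j) (lam (j + 1)) (Set.Ico b b')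
        + 2 * q + #{i | f i ∉ Set.Ico (lam 0) (lam s)} := by
  have hsplit : (#{i | f i ∈ Set.Ico b b'} : ℝ)
      ≤ ∑ j ∈ range s, (#{i | f i ∈ Set.Ico b b' ∩ Set.Ico (lam j) (lam (j + 1))} : ℝ)
        + #{i | f i ∉ Set.Ico (lam 0) (lam s)} := by
    exact_mod_cast card_le_sum_card_inter_Ico_add f lam (Set.Ico b b') s
  have hbuckets := sum_le_sum fun j (hj : j ∈ range s) =>
    card_inter_Ico_le_uniformEstimate f
      (hlam (Set.mem_Iic.2 (mem_range.1 hj).le) (Set.mem_Iic.2 (mem_range.1 hj)) j.lt_succ_self)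
      (hbucket j (mem_range.1 hj)) b b'
  rw [sum_add_distrib, sum_add_distrib] at hbuckets
  linarith [sum_ite_mem_Ioo_le lam hlam.monotoneOn q b, sum_ite_mem_Ioo_le lam hlam.monotoneOn q b']

end Buckets

section StrictMono

variable {α β : Type*} [Fintype α] [LinearOrder α] [LocallyFiniteOrder α] [LinearOrder β]
  {f : α → β}

lemma StrictMono.filter_mem_Ico_eq (hf : StrictMono f) (k l : α) :
    ({i | f i ∈ Set.Ico (f k) (f l)} : Finset α) = Finset.Ico k l := by
  ext i
  simp [hf.le_iff_le, hf.lt_iff_lt]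

lemma StrictMono.card_filter_not_mem_Ico (hf : StrictMono f) (k l : α) :
    #{i | f i ∉ Set.Ico (f k) (f l)} = Fintype.card α - #(Finset.Ico k l) := by
  rw [← hf.filter_mem_Ico_eq, ← card_compl, compl_filter]

end StrictMono

lemma strictMono_mul_sub_one {q : ℕ} (hq : 2 ≤ q) : StrictMono fun j : ℕ => j * q - 1 :=
  strictMono_nat_of_lt_succ fun j => by rw [Nat.succ_mul]; omega

/-- Per-machine error bound in the SMMS workload analysis: let `m = s·q` with
`s ≥ 1`, `q ≥ 2`, let `a : Fin m → ℝ` be the increasing enumeration of a set `A`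
of `m` distinct reals, and let `λ 0 = a 1` and `λ j` be the `(j·q)`-th smallest
element for `1 ≤ j ≤ s`.  For any half-open interval `[b, b')`, the actual count
`|A ∩ [b, b')|` is at most the estimated count
`∑_{j<s} q · len([b, b') ∩ [λ j, λ (j+1))) / (λ (j+1) - λ j)` plus `2q + 1`. -/
theorem smms_local_error (s q : ℕ) (hs : 1 ≤ s) (hq : 2 ≤ q) (m : ℕ) (hm : m = s * q)
    (a : Fin m → ℝ) (ha : StrictMono a)
    (lam : ℕ → ℝ)
    (hlam0 : lam 0 = a ⟨0, by subst hm; exact Nat.mul_pos (by omega) (by omega)⟩)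
    (hlamj : ∀ j, (hj1 : 1 ≤ j) → (hj2 : j ≤ s) → lam j =
        a ⟨j * q - 1, by
            subst hm
            exact lt_of_lt_of_le
              (Nat.sub_lt (Nat.mul_pos (by omega) (by omega)) (by omega))
              (Nat.mul_le_mul_right q hj2)⟩)
    (b b' : ℝ) :
    ((Finset.univ.filter (fun i : Fin m => b ≤ a i ∧ a i < b')).card : ℝ)
      ≤ (∑ j ∈ Finset.range s,
          (q : ℝ) * (MeasureTheory.volume
              (Set.Ico b b' ∩ Set.Ico (lam j) (lam (j + 1)))).toReal
            / (lam (j + 1) - lam j))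
        + 2 * q + 1 := by
  subst hm
  have hidx : ∀ j ≤ s, j * q - 1 < s * q := fun j hj => by
    have := Nat.mul_le_mul_right q hj
    have := Nat.mul_pos (by omega : 0 < s) (by omega : 0 < q)
    omega
  -- In `ℕ`, `0 * q - 1 = 0`, so `hlam0` is the case `j = 0` of `hlamj`.
  have hlam : ∀ j (hj : j ≤ s), lam j = a ⟨j * q - 1, hidx j hj⟩ := by
    intro j hj
    rcases Nat.eq_zero_or_pos j with rfl | hj0
    · simpa using hlam0
    · exact hlamj j hj0 hj
  have hmono : StrictMonoOn lam (Set.Iic s) := fun j hj k hk hjk => by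
    rw [hlam j hj, hlam k hk]
    exact ha (strictMono_mul_sub_one hq hjk)
  have hbucket : ∀ j < s, #{i | a i ∈ Set.Ico (lam j) (lam (j + 1))} ≤ q := fun j hj => by
    rw [hlam j hj.le, hlam (j + 1) hj, ha.filter_mem_Ico_eq, Fin.card_Ico]
    simp only [Nat.succ_mul]
    omega
  have houtside : #{i | a i ∉ Set.Ico (lam 0) (lam s)} = 1 := by
    rw [hlam 0 s.zero_le, hlam s le_rfl, ha.card_filter_not_mem_Ico, Fin.card_Ico,
      Fintype.card_fin]
    have := hidx s le_rfl
    simp only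
    omega
  have := card_Ico_le_sum_uniformEstimate a lam hmono hbucket b b'
  rwa [houtside, Nat.cast_one] at this
end

section
/- Let t ≥ 1, r ≥ 1 and q ≥ 2 be integers, set s = r·t, m = s·q and n = m·t. Let A_1, ..., A_t be pairwise disjoint sets of real numbers, each of size m, whose union S consists of n distinct reals. For each i, let a_{i,1} < ... < a_{i,m} be the increasing enumeration of A_i, define λ_{i,0} = a_{i,1} and λ_{i,j} = a_{i,j·q} for 1 ≤ j ≤ s, and define the total estimated count of a half-open interval [b, b') as est(b, b') = Σ_{i=1}^t Σ_{j=0}^{s−1} q · len([b, b') ∩ [λ_{i,j}, λ_{i,j+1})) / (λ_{i,j+1} − λ_{i,j}), where len denotes interval length. If [b, b') is an interval with est(b, b') = m, then |S ∩ [b, b')| ≤ m + 2m/r + t = (1 + 2/r + t²/n)·m. -/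
/-!
On one machine the local interval `[λ_j, λ_{j+1})` holds exactly the objects of index `k` with
`(k + 1) / q = j`, hence at most `q` of them, and only the maximum lies in no local interval.
A local interval inside `[b, b')` is estimated exactly, while one that meets `[b, b')` without
lying inside it contains `b` or `b'`; the local intervals being disjoint, this happens for at most
two of them. So each machine holds at most its estimate plus `2q + 1` objects of `[b, b')`, and
summing over the `t` machines gives `m + t (2q + 1) = m + 2m/r + t`.
-/

open Finset MeasureTheory

noncomputable def estimatedCount (q b b' lo hi : ℝ) : ℝ :=
  q * (volume (Set.Ico b b' ∩ Set.Ico lo hi)).toReal / (hi - lo)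

section EstimatedCount

variable {q b b' lo hi : ℝ}

lemma estimatedCount_nonneg (hq : 0 ≤ q) : 0 ≤ estimatedCount q b b' lo hi := by
  rcases le_or_gt hi lo with hle | hlt
  · simp [estimatedCount, Set.Ico_eq_empty_of_le hle]
  · exact div_nonneg (by positivity) (sub_nonneg.2 hlt.le)

lemma estimatedCount_of_subset (hlt : lo < hi) (hsub : Set.Ico lo hi ⊆ Set.Ico b b') :
    estimatedCount q b b' lo hi = q := by
  rw [estimatedCount, Set.inter_eq_self_of_subset_right hsub, Real.volume_Ico,
    ENNReal.toReal_ofReal (sub_nonneg.2 hlt.le), mul_div_assoc, div_self (sub_ne_zero.2 hlt.ne'),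
    mul_one]

lemma Ico_subset_or_mem_of_inter_nonempty (h : (Set.Ico lo hi ∩ Set.Ico b b').Nonempty) :
    Set.Ico lo hi ⊆ Set.Ico b b' ∨ b ∈ Set.Ico lo hi ∨ b' ∈ Set.Ico lo hi := by
  obtain ⟨x, ⟨hlo, hhi⟩, hb, hb'⟩ := h
  by_cases hblo : b ≤ lo
  · by_cases hhib' : hi ≤ b'
    · exact Or.inl (Set.Ico_subset_Ico hblo hhib')
    · exact Or.inr (Or.inr ⟨by linarith, by linarith⟩)
  · exact Or.inr (Or.inl ⟨by linarith, by linarith⟩)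

lemma le_estimatedCount_add_indicator (hq : 0 ≤ q) {c : ℝ} (hcq : c ≤ q)
    (hmeet : 0 < c → (Set.Ico lo hi ∩ Set.Ico b b').Nonempty) :
    c ≤ estimatedCount q b b' lo hi + (Set.Ico lo hi).indicator (fun _ => q) b
      + (Set.Ico lo hi).indicator (fun _ => q) b' := by
  have hest := estimatedCount_nonneg (b := b) (b' := b') (lo := lo) (hi := hi) hq
  have hind : ∀ x, 0 ≤ (Set.Ico lo hi).indicator (fun _ => q) x :=
    fun x => Set.indicator_nonneg (fun _ _ => hq) x
  rcases le_or_gt c 0 with hc | hc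
  · linarith [hind b, hind b']
  obtain ⟨x, hx, -⟩ := hmeet hc
  rcases Ico_subset_or_mem_of_inter_nonempty (hmeet hc) with hsub | hmem | hmem
  · rw [estimatedCount_of_subset (hx.1.trans_lt hx.2) hsub]
    linarith [hind b, hind b']
  · rw [Set.indicator_of_mem hmem]
    linarith [hind b']
  · rw [Set.indicator_of_mem hmem]
    linarith [hind b]

end EstimatedCount

lemma sum_indicator_Ico_le {f : ℕ → ℝ} {s : ℕ} (hf : MonotoneOn f (Set.Iic s)) {c : ℝ}
    (hc : 0 ≤ c) (x : ℝ) :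
    ∑ j ∈ range s, (Set.Ico (f j) (f (j + 1))).indicator (fun _ => c) x ≤ c := by
  have hcard : #{j ∈ range s | x ∈ Set.Ico (f j) (f (j + 1))} ≤ 1 := by
    refine card_le_one.2 fun j hj j' hj' => ?_
    simp only [mem_filter, mem_range, Set.mem_Ico] at hj hj'
    by_contra hne
    rcases lt_or_gt_of_ne hne with hlt | hlt
    · linarith [hf (Set.mem_Iic.2 (by omega : j + 1 ≤ s)) (Set.mem_Iic.2 hj'.1.le) hlt]
    · linarith [hf (Set.mem_Iic.2 (by omega : j' + 1 ≤ s)) (Set.mem_Iic.2 hj.1.le) hlt]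
  rw [sum_indicator_eq_sum_filter (t := fun j => Set.Ico (f j) (f (j + 1))) (g := fun _ => x),
    sum_const, nsmul_eq_mul]
  exact mul_le_of_le_one_left hc (by exact_mod_cast hcard)

lemma card_filter_succ_div_eq_le {m q : ℕ} (hq : 0 < q) (S : Finset (Fin m)) (j : ℕ) :
    #{k ∈ S | (k.1 + 1) / q = j} ≤ q := by
  calc #{k ∈ S | (k.1 + 1) / q = j}
      ≤ #(Ico (j * q) (j * q + q)) := by
        refine card_le_card_of_injOn (fun k => k.1 + 1) (fun k hk => ?_)
          (fun k _ k' _ h => Fin.ext (by simpa using h))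
        obtain ⟨-, rfl⟩ := mem_filter.1 hk
        exact mem_Ico.2 ⟨Nat.div_mul_le_self _ _, Nat.lt_div_mul_add hq⟩
    _ = q := by simp

section SortedSample

variable {s q m : ℕ} {av : Fin m → ℝ} {lam : ℕ → ℝ}

lemma sample_index_lt (hm : m = s * q) (hm0 : 0 < m) {j : ℕ} (hj : j ≤ s) : j * q - 1 < m := by
  have := Nat.mul_le_mul_right q hj
  omega

/-- In `hlam`, truncated subtraction makes `0 * q - 1 = 0`, so the formula also covers
`lam 0 = av 0`. -/
lemma sample_monotoneOn (hav : StrictMono av) (hm : m = s * q) (hm0 : 0 < m)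
    (hlam : ∀ j ≤ s, ∀ h : j * q - 1 < m, lam j = av ⟨j * q - 1, h⟩) :
    MonotoneOn lam (Set.Iic s) := by
  intro j hj j' hj' hjj'
  rw [hlam j hj (sample_index_lt hm hm0 hj), hlam j' hj' (sample_index_lt hm hm0 hj')]
  exact hav.monotone (Nat.sub_le_sub_right (Nat.mul_le_mul_right q hjj') 1)

lemma mem_Ico_sample (hav : StrictMono av) (hm : m = s * q) (hq : 0 < q)
    (hlam : ∀ j ≤ s, ∀ h : j * q - 1 < m, lam j = av ⟨j * q - 1, h⟩)
    (k : Fin m) (hk : (k.1 + 1) / q < s) :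
    av k ∈ Set.Ico (lam ((k.1 + 1) / q)) (lam ((k.1 + 1) / q + 1)) := by
  have hm0 : 0 < m := k.pos
  have hlo := Nat.div_mul_le_self (k.1 + 1) q
  have hhi := Nat.lt_div_mul_add (a := k.1 + 1) hq
  rw [hlam _ hk.le (sample_index_lt hm hm0 hk.le), hlam _ hk (sample_index_lt hm hm0 hk)]
  refine ⟨hav.monotone (Fin.le_def.2 ?_), hav (Fin.lt_def.2 ?_)⟩
  · dsimp only; omega
  · dsimp only; rw [Nat.succ_mul]; omega

lemma card_filter_last_block_le (hm : m = s * q) (S : Finset (Fin m)) :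
    #{k ∈ S | (k.1 + 1) / q = s} ≤ 1 := by
  refine card_le_one.2 fun k hk k' hk' => Fin.ext ?_
  have h := Nat.div_mul_le_self (k.1 + 1) q
  have h' := Nat.div_mul_le_self (k'.1 + 1) q
  rw [(mem_filter.1 hk).2] at h
  rw [(mem_filter.1 hk').2] at h'
  omega

lemma card_filter_mem_Ico_le_sum_estimatedCount (hav : StrictMono av) (hm : m = s * q)
    (hm0 : 0 < m) (hlam : ∀ j ≤ s, ∀ h : j * q - 1 < m, lam j = av ⟨j * q - 1, h⟩)
    (b b' : ℝ) :
    (#{k | av k ∈ Set.Ico b b'} : ℝ)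
      ≤ ∑ j ∈ range s, estimatedCount q b b' (lam j) (lam (j + 1)) + 2 * q + 1 := by
  have hq : 0 < q := Nat.pos_of_mul_pos_left (hm ▸ hm0)
  set C : Finset (Fin m) := {k | av k ∈ Set.Ico b b'}
  have hblocks : #C = ∑ j ∈ range (s + 1), #{k ∈ C | (k.1 + 1) / q = j} :=
    card_eq_sum_card_fiberwise fun k _ => mem_range.2 <| Nat.lt_succ_of_le <|
      Nat.div_le_of_le_mul (by rw [mul_comm, ← hm]; exact k.2)
  have hblock : ∀ j < s, (#{k ∈ C | (k.1 + 1) / q = j} : ℝ)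
      ≤ estimatedCount q b b' (lam j) (lam (j + 1))
      + (Set.Ico (lam j) (lam (j + 1))).indicator (fun _ => (q : ℝ)) b
      + (Set.Ico (lam j) (lam (j + 1))).indicator (fun _ => (q : ℝ)) b' := by
    intro j hj
    refine le_estimatedCount_add_indicator (by positivity)
      (by exact_mod_cast card_filter_succ_div_eq_le hq C j) fun hpos => ?_
    obtain ⟨k, hk⟩ := card_pos.1 (by exact_mod_cast hpos)
    obtain ⟨hkC, rfl⟩ := mem_filter.1 hk
    exact ⟨av k, mem_Ico_sample hav hm hq hlam k hj, (mem_filter.1 hkC).2⟩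
  have hmono := sample_monotoneOn hav hm hm0 hlam
  calc (#C : ℝ) = ∑ j ∈ range s, (#{k ∈ C | (k.1 + 1) / q = j} : ℝ)
        + #{k ∈ C | (k.1 + 1) / q = s} := by
        rw [hblocks, sum_range_succ]; push_cast; rfl
    _ ≤ ∑ j ∈ range s, (estimatedCount q b b' (lam j) (lam (j + 1))
          + (Set.Ico (lam j) (lam (j + 1))).indicator (fun _ => (q : ℝ)) b
          + (Set.Ico (lam j) (lam (j + 1))).indicator (fun _ => (q : ℝ)) b') + 1 :=
        add_le_add (sum_le_sum fun j hj => hblock j (mem_range.1 hj))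
          (by exact_mod_cast card_filter_last_block_le hm C)
    _ ≤ ∑ j ∈ range s, estimatedCount q b b' (lam j) (lam (j + 1)) + q + q + 1 := by
        rw [sum_add_distrib, sum_add_distrib]
        gcongr <;> exact sum_indicator_Ico_le hmono (by positivity) _
    _ = _ := by ring

end SortedSample

/-- SMMS workload theorem: `n = m·t` objects (all distinct reals) are split into
`t` groups of `m = s·q` objects with `s = r·t`; machine `i` holds the values
`a i 0 < a i 1 < ... < a i (m-1)` and samples `λ_{i,0} = a i 1` (the minimum) and
`λ_{i,j} =` the `(j·q)`-th smallest, for `1 ≤ j ≤ s`.  If `[b, b')` is a bucket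
whose total estimated count (assuming uniform density `q` over each local
interval `[λ_{i,j}, λ_{i,j+1})`) equals `m`, then the actual number of objects in
`[b, b')` is at most `m + 2m/r + t = (1 + 2/r + t²/n)·m`. -/
theorem smms_workload (t r q : ℕ) (ht : 1 ≤ t) (hr : 1 ≤ r) (hq : 2 ≤ q)
    (s : ℕ) (hs : s = r * t) (m : ℕ) (hm : m = s * q) (n : ℕ) (hn : n = m * t)
    (a : Fin t → Fin m → ℝ)
    (hmono : ∀ i, StrictMono (a i))
    (lam : Fin t → ℕ → ℝ)
    (hlam0 : ∀ i, lam i 0 =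
        a i ⟨0, by subst hm hs; exact Nat.mul_pos (Nat.mul_pos hr ht) (by omega)⟩)
    (hlamj : ∀ i j, (hj1 : 1 ≤ j) → (hj2 : j ≤ s) → lam i j =
        a i ⟨j * q - 1, by
            subst hm
            exact lt_of_lt_of_le
              (Nat.sub_lt (Nat.mul_pos (by omega) (by omega)) (by omega))
              (Nat.mul_le_mul_right q hj2)⟩)
    (b b' : ℝ)
    (hest : (∑ i : Fin t, ∑ j ∈ Finset.range s,
        (q : ℝ) * (MeasureTheory.volume
            (Set.Ico b b' ∩ Set.Ico (lam i j) (lam i (j + 1)))).toReal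
          / (lam i (j + 1) - lam i j)) = (m : ℝ)) :
    ((Finset.univ.filter
        (fun p : Fin t × Fin m => b ≤ a p.1 p.2 ∧ a p.1 p.2 < b')).card : ℝ)
      ≤ (m : ℝ) + 2 * m / r + t
    ∧ (m : ℝ) + 2 * m / r + t = (1 + 2 / r + (t : ℝ) ^ 2 / n) * m := by
  have hm0 : 0 < m := by subst hm hs; exact Nat.mul_pos (Nat.mul_pos hr ht) (by omega)
  have hlam : ∀ i, ∀ j ≤ s, ∀ h : j * q - 1 < m, lam i j = a i ⟨j * q - 1, h⟩ := by
    intro i j hj h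
    rcases Nat.eq_zero_or_pos j with rfl | hj1
    · simp [hlam0 i]
    · exact hlamj i j hj1 hj
  have hest : ∑ i, ∑ j ∈ range s, estimatedCount q b b' (lam i j) (lam i (j + 1)) = m := hest
  have hmachines : (#{p : Fin t × Fin m | b ≤ a p.1 p.2 ∧ a p.1 p.2 < b'} : ℝ)
      = ∑ i, (#{k | a i k ∈ Set.Ico b b'} : ℝ) := by
    simp only [card_filter, Fintype.sum_prod_type]; push_cast; rfl
  have hr0 : (r : ℝ) ≠ 0 := Nat.cast_ne_zero.2 (by omega)
  have hmr : (m : ℝ) = r * t * q := by rw [hm, hs]; push_cast; ring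
  refine ⟨?_, ?_⟩
  · calc _ = ∑ i, (#{k | a i k ∈ Set.Ico b b'} : ℝ) := hmachines
      _ ≤ ∑ i, (∑ j ∈ range s, estimatedCount q b b' (lam i j) (lam i (j + 1))
            + 2 * q + 1) :=
          sum_le_sum fun i _ =>
            card_filter_mem_Ico_le_sum_estimatedCount (hmono i) hm hm0 (hlam i) b b'
      _ = m + t * (2 * q + 1) := by
          simp only [sum_add_distrib, hest, sum_const, card_univ, Fintype.card_fin, nsmul_eq_mul]
          ring
      _ = m + 2 * m / r + t := by rw [hmr]; field_simp; ring
  · have ht0 : (t : ℝ) ≠ 0 := Nat.cast_ne_zero.2 (by omega)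
    have hm0' : (m : ℝ) ≠ 0 := Nat.cast_ne_zero.2 hm0.ne'
    rw [hn]; push_cast; field_simp
end

section
/- Let a, b be positive integers and t = a·b. Let M, N be positive integers and let X and Y be independent random variables with X binomially distributed with parameters M and 1/a, and Y binomially distributed with parameters N and 1/b. Let δ > 0 and f(δ) = e^δ / (1+δ)^{1+δ}. Then Pr[X·Y ≤ (1+δ)² · M·N / t] ≥ 1 − f(δ)^{M/a} − f(δ)^{N/b}. -/
/-!
If `X·Y` exceeds `(1+δ)²·M·N/t = ((1+δ)·M/a)·((1+δ)·N/b)`, then `X` exceeds `(1+δ)·M/a` or `Y`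
exceeds `(1+δ)·N/b`; a union bound reduces the claim to the two upper tails. Each tail is the
multiplicative Chernoff bound for a binomial variable with mean `μ = M p`: Markov's inequality for
`(1+δ)^X` together with `E[(1+δ)^X] = (1 + pδ)^M ≤ e^{δμ}` gives `e^{δμ} / (1+δ)^{(1+δ)μ} = f(δ)^μ`.
-/

open MeasureTheory

noncomputable def binomialProb (M : ℕ) (p : ℝ) (i : ℕ) : ℝ :=
  M.choose i * p ^ i * (1 - p) ^ (M - i)

section BinomialTail

variable (M : ℕ) {p : ℝ}

theorem binomialProb_nonneg (hp₀ : 0 ≤ p) (hp₁ : p ≤ 1) (i : ℕ) : 0 ≤ binomialProb M p i := by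
  unfold binomialProb
  have : 0 ≤ 1 - p := by linarith
  positivity

theorem binomialProb_eq_zero_of_notMem_range {i : ℕ} (h : i ∉ Finset.range (M + 1)) :
    binomialProb M p i = 0 := by
  simp [binomialProb, Nat.choose_eq_zero_of_lt (by simpa [Nat.lt_succ_iff] using h)]

theorem summable_binomialProb : Summable (binomialProb M p) :=
  summable_of_ne_finset_zero fun _ hi => binomialProb_eq_zero_of_notMem_range M hi

theorem tsum_binomialProb_mul_pow (s : ℝ) :
    ∑' i, binomialProb M p i * s ^ i = (1 + p * (s - 1)) ^ M := by
  rw [tsum_eq_sum fun i hi => by rw [binomialProb_eq_zero_of_notMem_range M hi, zero_mul],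
    show 1 + p * (s - 1) = p * s + (1 - p) by ring, add_pow]
  refine Finset.sum_congr rfl fun i _ => ?_
  rw [binomialProb, mul_pow]
  ring

theorem tsum_binomialProb_upper_tail_le (hp₀ : 0 ≤ p) (hp₁ : p ≤ 1) {δ : ℝ} (hδ : 0 ≤ δ) :
    ∑' i : {i : ℕ // (1 + δ) * (M * p) < i}, binomialProb M p i
      ≤ (Real.exp δ / (1 + δ) ^ (1 + δ)) ^ (M * p) := by
  set c := (1 + δ) * (M * p)
  have hs : 0 < 1 + δ := by linarith
  have hsummable : Summable fun i => binomialProb M p i * (1 + δ) ^ i * (1 + δ) ^ (-c) :=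
    summable_of_ne_finset_zero fun i hi => by
      rw [binomialProb_eq_zero_of_notMem_range M hi, zero_mul, zero_mul]
  -- Markov's inequality for `(1 + δ) ^ X`: on the tail, `(1 + δ) ^ (i - c) ≥ 1`.
  have markov : ∑' i : {i : ℕ // c < i}, binomialProb M p i
      ≤ ∑' i, binomialProb M p i * (1 + δ) ^ i * (1 + δ) ^ (-c) := by
    refine ((summable_binomialProb M).subtype _).tsum_le_tsum_of_inj Subtype.val
      Subtype.val_injective
      (fun i _ => by have := binomialProb_nonneg M hp₀ hp₁ i; positivity) (fun ⟨i, hi⟩ => ?_)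
      hsummable
    have : 1 ≤ (1 + δ : ℝ) ^ i * (1 + δ) ^ (-c) := by
      rw [← Real.rpow_natCast, ← Real.rpow_add hs]
      exact Real.one_le_rpow (by linarith) (by linarith)
    simpa [mul_assoc] using le_mul_of_one_le_right (binomialProb_nonneg M hp₀ hp₁ i) this
  have moment : (1 + p * δ) ^ M ≤ Real.exp (δ * (M * p)) := by
    calc (1 + p * δ) ^ M ≤ Real.exp (p * δ) ^ M := by
          gcongr
          linarith [Real.add_one_le_exp (p * δ)]
      _ = Real.exp (δ * (M * p)) := by rw [← Real.exp_nat_mul]; ring_nf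
  calc ∑' i : {i : ℕ // c < i}, binomialProb M p i
      ≤ ∑' i, binomialProb M p i * (1 + δ) ^ i * (1 + δ) ^ (-c) := markov
    _ = (1 + p * δ) ^ M * (1 + δ) ^ (-c) := by
      rw [tsum_mul_right, tsum_binomialProb_mul_pow, add_sub_cancel_left]
    _ ≤ Real.exp (δ * (M * p)) * (1 + δ) ^ (-c) := by gcongr
    _ = (Real.exp δ / (1 + δ) ^ (1 + δ)) ^ (M * p) := by
      rw [Real.div_rpow (Real.exp_pos _).le (Real.rpow_nonneg hs.le _), ← Real.exp_mul,
        ← Real.rpow_mul hs.le, Real.rpow_neg hs.le, div_eq_mul_inv]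

end BinomialTail

theorem measure_setOf_le_tsum_subtype {Ω α : Type*} [MeasurableSpace Ω] [Countable α]
    (μ : Measure Ω) (X : Ω → α) (P : α → Prop) :
    μ {ω | P (X ω)} ≤ ∑' i : {i // P i}, μ {ω | X ω = i} :=
  (measure_mono fun ω hω => Set.mem_iUnion.mpr ⟨⟨X ω, hω⟩, rfl⟩).trans (measure_iUnion_le _)

theorem measure_binomial_upper_tail_le {Ω : Type*} [MeasurableSpace Ω] (μ : Measure Ω)
    (M : ℕ) {p : ℝ} (hp₀ : 0 ≤ p) (hp₁ : p ≤ 1) (X : Ω → ℕ)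
    (hX : ∀ i, μ {ω | X ω = i} = ENNReal.ofReal (binomialProb M p i)) {δ : ℝ} (hδ : 0 ≤ δ) :
    μ {ω | (1 + δ) * (M * p) < X ω}
      ≤ ENNReal.ofReal ((Real.exp δ / (1 + δ) ^ (1 + δ)) ^ (M * p)) := by
  calc μ {ω | (1 + δ) * (M * p) < X ω}
      ≤ ∑' i : {i : ℕ // (1 + δ) * (M * p) < i}, μ {ω | X ω = i} :=
        measure_setOf_le_tsum_subtype μ X _
    _ = ENNReal.ofReal (∑' i : {i : ℕ // (1 + δ) * (M * p) < i}, binomialProb M p i) := by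
      rw [ENNReal.ofReal_tsum_of_nonneg (fun i => binomialProb_nonneg M hp₀ hp₁ _)
        ((summable_binomialProb M).subtype _)]
      exact tsum_congr fun i => hX i
    _ ≤ _ := ENNReal.ofReal_le_ofReal (tsum_binomialProb_upper_tail_le M hp₀ hp₁ hδ)

theorem ofReal_one_sub_sub_le_measure {Ω : Type*} [MeasurableSpace Ω] (μ : Measure Ω)
    [IsProbabilityMeasure μ] {S A B : Set Ω} (hcover : Sᶜ ⊆ A ∪ B) {r₁ r₂ : ℝ}
    (hr₁ : 0 ≤ r₁) (hr₂ : 0 ≤ r₂) (hA : μ A ≤ ENNReal.ofReal r₁) (hB : μ B ≤ ENNReal.ofReal r₂) :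
    ENNReal.ofReal (1 - r₁ - r₂) ≤ μ S := by
  have union_bound : 1 ≤ μ S + (ENNReal.ofReal r₁ + ENNReal.ofReal r₂) :=
    calc 1 = μ (S ∪ Sᶜ) := by rw [Set.union_compl_self, measure_univ]
      _ ≤ μ S + μ Sᶜ := measure_union_le _ _
      _ ≤ μ S + (μ A + μ B) := by gcongr; exact (measure_mono hcover).trans (measure_union_le _ _)
      _ ≤ μ S + (ENNReal.ofReal r₁ + ENNReal.ofReal r₂) := by gcongr
  rw [ENNReal.ofReal_sub _ hr₂, ENNReal.ofReal_sub _ hr₁, ENNReal.ofReal_one, tsub_le_iff_right,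
    tsub_le_iff_right, add_right_comm, add_assoc]
  exact union_bound

theorem randjoin_product_chernoff_general {Ω : Type*} [MeasurableSpace Ω] (Pr : Measure Ω)
    [IsProbabilityMeasure Pr]
    (a b : ℕ) (ha : 0 < a) (hb : 0 < b) (t : ℕ) (ht : t = a * b)
    (M N : ℕ)
    (X Y : Ω → ℕ)
    (hX : ∀ i : ℕ, Pr {ω | X ω = i} =
        ENNReal.ofReal ((M.choose i : ℝ) * (1 / (a : ℝ)) ^ i * (1 - 1 / (a : ℝ)) ^ (M - i)))
    (hY : ∀ j : ℕ, Pr {ω | Y ω = j} =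
        ENNReal.ofReal ((N.choose j : ℝ) * (1 / (b : ℝ)) ^ j * (1 - 1 / (b : ℝ)) ^ (N - j)))
    (δ : ℝ) (hδ : 0 < δ) :
    Pr {ω | ((X ω : ℝ) * (Y ω : ℝ)) ≤ (1 + δ) ^ 2 * M * N / t}
      ≥ ENNReal.ofReal
          (1 - (Real.exp δ / (1 + δ) ^ (1 + δ)) ^ ((M : ℝ) / a)
             - (Real.exp δ / (1 + δ) ^ (1 + δ)) ^ ((N : ℝ) / b)) := by
  have one_div_le_one {n : ℕ} (hn : 0 < n) : 1 / (n : ℝ) ≤ 1 := div_le_one_of_le₀ (by simpa) n.cast_nonneg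
  have tailX := measure_binomial_upper_tail_le Pr M (by positivity) (one_div_le_one ha) X hX hδ.le
  have tailY := measure_binomial_upper_tail_le Pr N (by positivity) (one_div_le_one hb) Y hY hδ.le
  rw [mul_one_div] at tailX tailY
  refine ofReal_one_sub_sub_le_measure Pr (fun ω hω => ?_) (by positivity) (by positivity)
    tailX tailY
  by_contra hbelow
  simp only [Set.mem_union, Set.mem_ofPred_eq, not_or, not_lt] at hbelow
  refine hω ((mul_le_mul hbelow.1 hbelow.2 (by positivity) (by positivity)).trans_eq ?_)
  subst ht
  push_cast
  field_simp

/-- Product Chernoff bound used in the RandJoin analysis: let `t = a·b`, let `X`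
and `Y` be independent with `X ~ Binomial(M, 1/a)` and `Y ~ Binomial(N, 1/b)`,
and let `f δ = e^δ / (1+δ)^(1+δ)`.  Then
`Pr[X·Y ≤ (1+δ)²·M·N/t] ≥ 1 - f(δ)^(M/a) - f(δ)^(N/b)`. -/
theorem randjoin_product_chernoff {Ω : Type*} [MeasurableSpace Ω] (Pr : Measure Ω)
    [IsProbabilityMeasure Pr]
    (a b : ℕ) (ha : 0 < a) (hb : 0 < b) (t : ℕ) (ht : t = a * b)
    (M N : ℕ) (hM : 0 < M) (hN : 0 < N)
    (X Y : Ω → ℕ)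
    (hX : ∀ i : ℕ, Pr {ω | X ω = i} =
        ENNReal.ofReal ((M.choose i : ℝ) * (1 / (a : ℝ)) ^ i * (1 - 1 / (a : ℝ)) ^ (M - i)))
    (hY : ∀ j : ℕ, Pr {ω | Y ω = j} =
        ENNReal.ofReal ((N.choose j : ℝ) * (1 / (b : ℝ)) ^ j * (1 - 1 / (b : ℝ)) ^ (N - j)))
    (hindep : ∀ i j : ℕ,
        Pr ({ω | X ω = i} ∩ {ω | Y ω = j}) = Pr {ω | X ω = i} * Pr {ω | Y ω = j})
    (δ : ℝ) (hδ : 0 < δ) :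
    Pr {ω | ((X ω : ℝ) * (Y ω : ℝ)) ≤ (1 + δ) ^ 2 * M * N / t}
      ≥ ENNReal.ofReal
          (1 - (Real.exp δ / (1 + δ) ^ (1 + δ)) ^ ((M : ℝ) / a)
             - (Real.exp δ / (1 + δ) ^ (1 + δ)) ^ ((N : ℝ) / b)) :=
  randjoin_product_chernoff_general Pr a b ha hb t ht M N X Y hX hY δ hδ
end

section
/- Let a, b be positive integers and t = a·b. Let M, N be positive integers with M/a ≥ 300 and N/b ≥ 300, and let X and Y be independent random variables with X binomially distributed with parameters M and 1/a, and Y binomially distributed with parameters N and 1/b. Then Pr[X·Y < 2·M·N/t] ≥ 1 − 1.2×10⁻⁹. -/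
/-!
If `X·Y ≥ 2MN/t = 2(M/a)(N/b)` then, since `1.4² < 2`, one of `X ≥ 1.4·M/a` and `Y ≥ 1.4·N/b`
holds. Each of these upper tails is bounded by the exponential-moment (Chernoff) bound with
`λ = 1/3`, which for a mean of at least `300` gives less than `0.6×10⁻⁹`; a union bound
finishes the proof.
-/

open MeasureTheory Finset Real

theorem sum_choose_mul_pow_mul_pow_filter_le_exp (n : ℕ) {p : ℝ} (hp₀ : 0 ≤ p) (hp₁ : p ≤ 1)
    {l : ℝ} (hl : 0 ≤ l) (c : ℝ) :
    ∑ i ∈ (range (n + 1)).filter (fun i : ℕ => c ≤ i),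
        (n.choose i : ℝ) * p ^ i * (1 - p) ^ (n - i)
      ≤ exp (n * p * (exp l - 1) - l * c) := by
  have hq : 0 ≤ 1 - p := by linarith
  have hterm : ∀ i ∈ (range (n + 1)).filter (fun i : ℕ => c ≤ i),
      (n.choose i : ℝ) * p ^ i * (1 - p) ^ (n - i)
        ≤ exp (-(l * c)) * ((n.choose i : ℝ) * (p * exp l) ^ i * (1 - p) ^ (n - i)) := by
    intro i hi
    have hone : 1 ≤ exp (-(l * c)) * exp l ^ i := by
      rw [← exp_nat_mul, ← exp_add, one_le_exp_iff]
      nlinarith [(mem_filter.1 hi).2]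
    calc (n.choose i : ℝ) * p ^ i * (1 - p) ^ (n - i)
        ≤ (exp (-(l * c)) * exp l ^ i) * ((n.choose i : ℝ) * p ^ i * (1 - p) ^ (n - i)) :=
          le_mul_of_one_le_left (by positivity) hone
      _ = _ := by ring
  have hbase : 0 ≤ 1 + p * (exp l - 1) := by
    nlinarith [one_le_exp hl]
  calc _ ≤ ∑ i ∈ (range (n + 1)).filter (fun i : ℕ => c ≤ i),
          exp (-(l * c)) * ((n.choose i : ℝ) * (p * exp l) ^ i * (1 - p) ^ (n - i)) :=
        sum_le_sum hterm
    _ ≤ ∑ i ∈ range (n + 1),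
          exp (-(l * c)) * ((n.choose i : ℝ) * (p * exp l) ^ i * (1 - p) ^ (n - i)) :=
        sum_le_sum_of_subset_of_nonneg (filter_subset _ _) fun i _ _ => by positivity
    _ = exp (-(l * c)) * (1 + p * (exp l - 1)) ^ n := by
        rw [← mul_sum, show 1 + p * (exp l - 1) = p * exp l + (1 - p) by ring, add_pow]
        simp only [mul_comm, mul_left_comm]
    _ ≤ exp (-(l * c)) * exp (p * (exp l - 1)) ^ n := by
        gcongr
        linarith [add_one_le_exp (p * (exp l - 1))]
    _ = exp (n * p * (exp l - 1) - l * c) := by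
        rw [← exp_nat_mul, ← exp_add]
        ring_nf

theorem measure_le_natCast_le_exp_of_binomial {Ω : Type*} [MeasurableSpace Ω] (P : Measure Ω)
    (Z : Ω → ℕ) (n : ℕ) {p : ℝ} (hp₀ : 0 ≤ p) (hp₁ : p ≤ 1)
    (hZ : ∀ i : ℕ, P {ω | Z ω = i} =
        ENNReal.ofReal ((n.choose i : ℝ) * p ^ i * (1 - p) ^ (n - i)))
    {l : ℝ} (hl : 0 ≤ l) (c : ℝ) :
    P {ω | c ≤ (Z ω : ℝ)} ≤ ENNReal.ofReal (exp (n * p * (exp l - 1) - l * c)) := by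
  set s := (range (n + 1)).filter (fun i : ℕ => c ≤ i)
  have hnull : P {ω | n < Z ω} = 0 := by
    refine measure_mono_null (t := ⋃ i : ℕ, {ω | Z ω = n + 1 + i}) ?_ (measure_iUnion_null ?_)
    · intro ω hω
      exact Set.mem_iUnion.2 ⟨Z ω - (n + 1), by simp only [Set.mem_ofPred_eq] at hω ⊢; omega⟩
    · intro i
      rw [hZ, Nat.choose_eq_zero_of_lt (by omega)]
      simp
  have hcover : {ω | c ≤ (Z ω : ℝ)} ⊆ (⋃ i ∈ s, {ω | Z ω = i}) ∪ {ω | n < Z ω} := by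
    intro ω hω
    by_cases hZn : n < Z ω
    · exact Or.inr hZn
    · exact Or.inl (Set.mem_biUnion (mem_filter.2 ⟨mem_range.2 (by omega), hω⟩) rfl)
  have hq : 0 ≤ 1 - p := by linarith
  calc P {ω | c ≤ (Z ω : ℝ)}
      ≤ P (⋃ i ∈ s, {ω | Z ω = i}) + P {ω | n < Z ω} :=
        (measure_mono hcover).trans (measure_union_le _ _)
    _ ≤ ∑ i ∈ s, P {ω | Z ω = i} := by
        rw [hnull, add_zero]
        exact measure_biUnion_finset_le s _
    _ = ENNReal.ofReal (∑ i ∈ s, (n.choose i : ℝ) * p ^ i * (1 - p) ^ (n - i)) := by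
        rw [ENNReal.ofReal_sum_of_nonneg fun i _ => by positivity]
        exact sum_congr rfl fun i _ => hZ i
    _ ≤ _ := ENNReal.ofReal_le_ofReal (sum_choose_mul_pow_mul_pow_filter_le_exp n hp₀ hp₁ hl c)

theorem exp_one_third_le : exp (1 / 3) ≤ 1.3957 := by
  refine (exp_bound' (x := 1 / 3) (by norm_num) (by norm_num) (n := 5) (by norm_num)).trans ?_
  simp only [sum_range_succ, Nat.factorial]
  norm_num

theorem exp_neg_21_29_le : exp (-21.29) ≤ 0.6 / 10 ^ 9 := by
  have hlower : 2.7182818283 ^ 21 * 1.29 ≤ exp 21.29 := by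
    rw [show (21.29 : ℝ) = (21 : ℕ) * 1 + 0.29 by norm_num, exp_add, exp_nat_mul]
    gcongr
    · exact exp_one_gt_d9.le
    · linarith [add_one_le_exp (0.29 : ℝ)]
  rw [exp_neg]
  calc (exp 21.29)⁻¹ ≤ (2.7182818283 ^ 21 * 1.29)⁻¹ := inv_anti₀ (by positivity) hlower
    _ ≤ 0.6 / 10 ^ 9 := by norm_num

theorem measure_seven_fifths_mean_le_of_binomial {Ω : Type*} [MeasurableSpace Ω] (P : Measure Ω)
    (Z : Ω → ℕ) (n : ℕ) {p : ℝ} (hp₀ : 0 ≤ p) (hp₁ : p ≤ 1)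
    (hZ : ∀ i : ℕ, P {ω | Z ω = i} =
        ENNReal.ofReal ((n.choose i : ℝ) * p ^ i * (1 - p) ^ (n - i)))
    (hmean : 300 ≤ n * p) :
    P {ω | 1.4 * (n * p) ≤ (Z ω : ℝ)} ≤ ENNReal.ofReal (0.6 / 10 ^ 9) := by
  refine (measure_le_natCast_le_exp_of_binomial P Z n hp₀ hp₁ hZ (l := 1 / 3) (by norm_num) _).trans
    (ENNReal.ofReal_le_ofReal ((exp_le_exp.2 ?_).trans exp_neg_21_29_le))
  nlinarith [exp_one_third_le]

theorem randjoin_workload_general {Ω : Type*} [MeasurableSpace Ω] (Pr : Measure Ω)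
    [IsProbabilityMeasure Pr]
    (a b : ℕ) (t : ℕ) (ht : t = a * b)
    (M N : ℕ)
    (hMa : (300 : ℝ) ≤ (M : ℝ) / a) (hNb : (300 : ℝ) ≤ (N : ℝ) / b)
    (X Y : Ω → ℕ)
    (hX : ∀ i : ℕ, Pr {ω | X ω = i} =
        ENNReal.ofReal ((M.choose i : ℝ) * (1 / (a : ℝ)) ^ i * (1 - 1 / (a : ℝ)) ^ (M - i)))
    (hY : ∀ j : ℕ, Pr {ω | Y ω = j} =
        ENNReal.ofReal ((N.choose j : ℝ) * (1 / (b : ℝ)) ^ j * (1 - 1 / (b : ℝ)) ^ (N - j))) :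
    Pr {ω | ((X ω : ℝ) * (Y ω : ℝ)) < 2 * M * N / t}
      ≥ ENNReal.ofReal (1 - 1.2 / 10 ^ 9) := by
  rw [← mul_one_div] at hMa hNb
  have hXtail := measure_seven_fifths_mean_le_of_binomial Pr X M (by positivity)
    (one_div (a : ℝ) ▸ Nat.cast_inv_le_one a) hX hMa
  have hYtail := measure_seven_fifths_mean_le_of_binomial Pr Y N (by positivity)
    (one_div (b : ℝ) ▸ Nat.cast_inv_le_one b) hY hNb
  have hthreshold : 2 * (M : ℝ) * N / t = 2 * (M * (1 / a)) * (N * (1 / b)) := by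
    rw [ht, Nat.cast_mul]
    ring
  set S := {ω | ((X ω : ℝ) * (Y ω : ℝ)) < 2 * M * N / t}
  have hcover : Sᶜ ⊆
      {ω | 1.4 * (M * (1 / a)) ≤ (X ω : ℝ)} ∪ {ω | 1.4 * (N * (1 / b)) ≤ (Y ω : ℝ)} := by
    intro ω hω
    simp only [S, Set.mem_compl_iff, Set.mem_ofPred_eq, not_lt, hthreshold] at hω
    by_contra! h
    simp only [Set.mem_union, Set.mem_ofPred_eq, not_or, not_le] at h
    nlinarith [h.1, h.2, (X ω).cast_nonneg (α := ℝ), (Y ω).cast_nonneg (α := ℝ)]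
  have hcompl : Pr Sᶜ ≤ ENNReal.ofReal (1.2 / 10 ^ 9) :=
    calc Pr Sᶜ ≤ _ := (measure_mono hcover).trans (measure_union_le _ _)
      _ ≤ ENNReal.ofReal (0.6 / 10 ^ 9) + ENNReal.ofReal (0.6 / 10 ^ 9) := add_le_add hXtail hYtail
      _ = ENNReal.ofReal (1.2 / 10 ^ 9) := by
        rw [← ENNReal.ofReal_add (by norm_num) (by norm_num)]
        norm_num
  rw [ge_iff_le, ENNReal.ofReal_sub _ (by norm_num), ENNReal.ofReal_one, tsub_le_iff_right]
  calc 1 = Pr Set.univ := measure_univ.symm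
    _ ≤ Pr S + Pr Sᶜ := measure_univ_le_add_compl S
    _ ≤ Pr S + ENNReal.ofReal (1.2 / 10 ^ 9) := by gcongr

/-- Workload guarantee of RandJoin: let `t = a·b`, `M/a ≥ 300`, `N/b ≥ 300`, and
let `X` and `Y` be independent with `X ~ Binomial(M, 1/a)`, `Y ~ Binomial(N, 1/b)`.
Then `Pr[X·Y < 2·M·N/t] ≥ 1 - 1.2×10⁻⁹`. -/
theorem randjoin_workload {Ω : Type*} [MeasurableSpace Ω] (Pr : Measure Ω)
    [IsProbabilityMeasure Pr]
    (a b : ℕ) (ha : 0 < a) (hb : 0 < b) (t : ℕ) (ht : t = a * b)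
    (M N : ℕ) (hM : 0 < M) (hN : 0 < N)
    (hMa : (300 : ℝ) ≤ (M : ℝ) / a) (hNb : (300 : ℝ) ≤ (N : ℝ) / b)
    (X Y : Ω → ℕ)
    (hX : ∀ i : ℕ, Pr {ω | X ω = i} =
        ENNReal.ofReal ((M.choose i : ℝ) * (1 / (a : ℝ)) ^ i * (1 - 1 / (a : ℝ)) ^ (M - i)))
    (hY : ∀ j : ℕ, Pr {ω | Y ω = j} =
        ENNReal.ofReal ((N.choose j : ℝ) * (1 / (b : ℝ)) ^ j * (1 - 1 / (b : ℝ)) ^ (N - j)))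
    (hindep : ∀ i j : ℕ,
        Pr ({ω | X ω = i} ∩ {ω | Y ω = j}) = Pr {ω | X ω = i} * Pr {ω | Y ω = j}) :
    Pr {ω | ((X ω : ℝ) * (Y ω : ℝ)) < 2 * M * N / t}
      ≥ ENNReal.ofReal (1 - 1.2 / 10 ^ 9) :=
  randjoin_workload_general Pr a b t ht M N hMa hNb X Y hX hY
end

section
/- Let M, N, j be positive integers and let W and t be positive reals (t may be taken to be a positive integer) such that N ≤ M, j ≤ M, and M·N ≤ j·W/t. Then ⌈M/j⌉ · N < 2·W/t. -/
/-! Since `j ≤ M`, the ratio `M / j` is at least `1`, so rounding it up less than doubles it: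
`⌈M/j⌉ < M/j + 1 ≤ 2·M/j`. Hence `⌈M/j⌉·N < 2·M·N/j ≤ 2·W/t`. -/

lemma ceil_natCast_div_mul_lt {M N j : ℕ} (hN : 0 < N) (hj : 0 < j) (hjM : j ≤ M) :
    (⌈(M : ℝ) / j⌉ : ℝ) * N < 2 * ((M : ℝ) * N / j) := by
  have hx : (2 : ℝ)⁻¹ < M / j := by
    calc (2 : ℝ)⁻¹ < 1 := by norm_num
      _ ≤ M / j := (one_le_div (by positivity)).2 (by exact_mod_cast hjM)
  calc (⌈(M : ℝ) / j⌉ : ℝ) * N < 2 * (M / j) * N := by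
        gcongr
        exact Int.ceil_lt_two_mul hx
    _ = 2 * ((M : ℝ) * N / j) := by ring

theorem statjoin_big_result_general (M N j : ℕ) (hN : 0 < N) (hj : 0 < j)
    (W t : ℝ)
    (hjM : j ≤ M)
    (hMN : (M : ℝ) * N ≤ j * W / t) :
    (⌈(M : ℝ) / j⌉ : ℝ) * N < 2 * W / t := by
  have hload : (M : ℝ) * N / j ≤ W / t := by
    rw [div_le_iff₀ (by positivity), mul_comm (W / t), ← mul_div_assoc]
    exact hMN
  calc (⌈(M : ℝ) / j⌉ : ℝ) * N < 2 * ((M : ℝ) * N / j) := ceil_natCast_div_mul_lt hN hj hjM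
    _ ≤ 2 * (W / t) := by gcongr
    _ = 2 * W / t := by ring

/-- Big-join-result bound of StatJoin: if `N ≤ M`, `j ≤ M` and `M·N ≤ j·W/t`,
then `⌈M/j⌉·N < 2·W/t`. -/
theorem statjoin_big_result (M N j : ℕ) (hM : 0 < M) (hN : 0 < N) (hj : 0 < j)
    (W t : ℝ) (hW : 0 < W) (ht : 0 < t)
    (hNM : N ≤ M) (hjM : j ≤ M)
    (hMN : (M : ℝ) * N ≤ j * W / t) :
    (⌈(M : ℝ) / j⌉ : ℝ) * N < 2 * W / t :=
  statjoin_big_result_general M N j hN hj W t hjM hMN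
end
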